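/- arXiv:2508.19949 — 2 statements merged into one kernel-verified Lean document; each statement's English description precedes it below -/
import Mathlib

section
/- Let a : [0,∞) → [0,∞) be non-increasing and integrable, and let v ≥ 0. Then for any positive integer m and step size Δ > 0, the Riemann-type error satisfies ∫_0^{mΔ} a(τ(s))^v [a(τ(s)) − a(s)] ds ≤ a(0)^v ∫_0^Δ [a(0) − a(s)] ds + ∫_0^Δ a(s)^{v+1} ds, where τ(s) = ⌊s/Δ⌋Δ. In particular this error is bounded by C·Δ for a constant C depending only on a and v. -/
/-!
On the step `[kΔ, (k+1)Δ)` the integrand is `a(kΔ)^v (a(kΔ) - a s)`, which is at most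
`a(kΔ)^(v+1) - (a s)^(v+1)` because `a s ≤ a(kΔ)`. For `k ≥ 1` monotonicity also gives
`Δ a(kΔ)^(v+1) ≤ ∫_{(k-1)Δ}^{kΔ} a^(v+1)`, so the contributions of all steps but the first
telescope to at most `∫_0^Δ a^(v+1)`.
-/

open MeasureTheory Set intervalIntegral

lemma Real.rpow_mul_sub_le_rpow_add_one_sub {v x y : ℝ} (hv : 0 ≤ v) (hy : 0 ≤ y) (hyx : y ≤ x) :
    x ^ v * (x - y) ≤ x ^ (v + 1) - y ^ (v + 1) := by
  rw [Real.rpow_add_one' (hy.trans hyx) (by linarith), Real.rpow_add_one' hy (by linarith)]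
  nlinarith [mul_le_mul_of_nonneg_right (Real.rpow_le_rpow hy hyx hv) hy]

lemma AntitoneOn.rpow_const {b : ℝ → ℝ} {s : Set ℝ} {v : ℝ} (hb : AntitoneOn b s)
    (hb0 : ∀ t ∈ s, 0 ≤ b t) (hv : 0 ≤ v) : AntitoneOn (fun t => b t ^ v) s :=
  fun _ hp _ hq hpq => Real.rpow_le_rpow (hb0 _ hq) (hb hp hq hpq) hv

section ConstantBounds

variable {f : ℝ → ℝ} {x y c : ℝ}

lemma integral_le_sub_mul_of_le (hxy : x ≤ y) (hf : IntervalIntegrable f volume x y)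
    (h : ∀ s ∈ Icc x y, f s ≤ c) : ∫ s in x..y, f s ≤ (y - x) * c := by
  simpa using integral_mono_on hxy hf intervalIntegrable_const h

lemma sub_mul_le_integral_of_le (hxy : x ≤ y) (hf : IntervalIntegrable f volume x y)
    (h : ∀ s ∈ Icc x y, c ≤ f s) : (y - x) * c ≤ ∫ s in x..y, f s := by
  simpa using integral_mono_on hxy intervalIntegrable_const hf h

end ConstantBounds

lemma integral_rpow_mul_sub_le {b : ℝ → ℝ} {v x y : ℝ} (hxy : x ≤ y)
    (hb : AntitoneOn b (Icc x y)) (hb0 : ∀ s ∈ Icc x y, 0 ≤ b s) (hv : 0 ≤ v) :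
    ∫ s in x..y, b x ^ v * (b x - b s) ≤ (y - x) * b x ^ (v + 1) - ∫ s in x..y, b s ^ (v + 1) := by
  have hx : x ∈ Icc x y := left_mem_Icc.2 hxy
  have hb_int : IntervalIntegrable b volume x y :=
    (hb.mono (uIcc_of_le hxy).le).intervalIntegrable
  have hpow_int : IntervalIntegrable (fun s => b s ^ (v + 1)) volume x y :=
    ((hb.rpow_const hb0 (by linarith)).mono (uIcc_of_le hxy).le).intervalIntegrable
  calc ∫ s in x..y, b x ^ v * (b x - b s)
      ≤ ∫ s in x..y, (b x ^ (v + 1) - b s ^ (v + 1)) :=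
        integral_mono_on hxy ((intervalIntegrable_const.sub hb_int).const_mul _)
          (intervalIntegrable_const.sub hpow_int) fun s hs =>
            Real.rpow_mul_sub_le_rpow_add_one_sub hv (hb0 s hs) (hb hx hs hs.1)
    _ = (y - x) * b x ^ (v + 1) - ∫ s in x..y, b s ^ (v + 1) := by
        rw [integral_sub intervalIntegrable_const hpow_int, intervalIntegral.integral_const,
          smul_eq_mul]

lemma AntitoneOn.sub_mul_le_integral {b : ℝ → ℝ} {x y : ℝ} (hxy : x ≤ y)
    (hb : AntitoneOn b (Icc x y)) : (y - x) * b y ≤ ∫ s in x..y, b s :=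
  sub_mul_le_integral_of_le hxy (hb.mono (uIcc_of_le hxy).le).intervalIntegrable
    fun _ hs => hb hs (right_mem_Icc.2 hxy) hs.2

lemma AntitoneOn.integral_le_sub_mul {b : ℝ → ℝ} {x y : ℝ} (hxy : x ≤ y)
    (hb : AntitoneOn b (Icc x y)) : ∫ s in x..y, b s ≤ (y - x) * b x :=
  integral_le_sub_mul_of_le hxy (hb.mono (uIcc_of_le hxy).le).intervalIntegrable
    fun _ hs => hb (left_mem_Icc.2 hxy) hs hs.1

section FloorStep

variable {Δ : ℝ}

lemma floor_div_mul_eq_of_mem_Ico (hΔ : 0 < Δ) {k : ℕ} {s : ℝ}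
    (hs : s ∈ Ico (k * Δ) ((k + 1) * Δ)) : (⌊s / Δ⌋ : ℝ) * Δ = k * Δ := by
  have hfloor : ⌊s / Δ⌋ = k := by
    rw [Int.floor_eq_iff, le_div_iff₀ hΔ, div_lt_iff₀ hΔ]
    exact_mod_cast hs
  rw [hfloor, Int.cast_natCast]

lemma integral_comp_floor_step (G : ℝ → ℝ → ℝ) (hΔ : 0 < Δ) (k : ℕ) :
    ∫ s in k * Δ..(k + 1) * Δ, G (⌊s / Δ⌋ * Δ) s = ∫ s in k * Δ..(k + 1) * Δ, G (k * Δ) s :=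
  integral_congr_Ioo_of_le (by nlinarith) fun _ hs => by
    rw [floor_div_mul_eq_of_mem_Ico hΔ (Ioo_subset_Ico_self hs)]

lemma intervalIntegrable_comp_floor_step_iff (G : ℝ → ℝ → ℝ) (hΔ : 0 < Δ) (k : ℕ) :
    IntervalIntegrable (fun s => G (⌊s / Δ⌋ * Δ) s) volume (k * Δ) ((k + 1) * Δ) ↔
      IntervalIntegrable (fun s => G (k * Δ) s) volume (k * Δ) ((k + 1) * Δ) :=
  intervalIntegrable_congr_uIoo fun _ hs => by
    rw [uIoo_of_le (by nlinarith)] at hs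
    simp only [floor_div_mul_eq_of_mem_Ico hΔ (Ioo_subset_Ico_self hs)]

end FloorStep

section FloorStepError

variable {a : ℝ → ℝ} {v Δ : ℝ}

lemma intervalIntegrable_floor_step_error (ha : AntitoneOn a (Ici 0)) (hΔ : 0 < Δ) (k : ℕ) :
    IntervalIntegrable (fun s => a (⌊s / Δ⌋ * Δ) ^ v * (a (⌊s / Δ⌋ * Δ) - a s)) volume
      (k * Δ) ((k + 1) * Δ) := by
  have hk : (k : ℝ) * Δ ≤ (k + 1) * Δ := by nlinarith
  have ha_step : AntitoneOn a (uIcc (k * Δ) ((k + 1) * Δ)) :=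
    ha.mono fun _ hs => le_trans (by positivity) (uIcc_of_le hk ▸ hs).1
  exact (intervalIntegrable_comp_floor_step_iff (fun τ s => a τ ^ v * (a τ - a s)) hΔ k).2
    ((intervalIntegrable_const.sub ha_step.intervalIntegrable).const_mul _)

lemma integral_floor_step_error_succ_le (ha0 : ∀ x ∈ Ici (0:ℝ), 0 ≤ a x)
    (ha : AntitoneOn a (Ici 0)) (hv : 0 ≤ v) (hΔ : 0 < Δ) (k : ℕ) :
    ∫ s in (k + 1) * Δ..(k + 1 + 1) * Δ, a (⌊s / Δ⌋ * Δ) ^ v * (a (⌊s / Δ⌋ * Δ) - a s)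
      ≤ (∫ s in k * Δ..(k + 1) * Δ, a s ^ (v + 1))
        - ∫ s in (k + 1) * Δ..(k + 1 + 1) * Δ, a s ^ (v + 1) := by
  have hk : 0 ≤ (k : ℝ) * Δ := by positivity
  have hsub : ∀ x y : ℝ, 0 ≤ x → Icc x y ⊆ Ici 0 := fun _ _ hx _ hs => hx.trans hs.1
  have hstep : ∫ s in (k + 1) * Δ..(k + 1 + 1) * Δ,
        a (⌊s / Δ⌋ * Δ) ^ v * (a (⌊s / Δ⌋ * Δ) - a s)
      = ∫ s in (k + 1) * Δ..(k + 1 + 1) * Δ, a ((k + 1) * Δ) ^ v * (a ((k + 1) * Δ) - a s) := by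
    exact_mod_cast integral_comp_floor_step (fun τ s => a τ ^ v * (a τ - a s)) hΔ (k + 1)
  have hpiece :
      ∫ s in (k + 1) * Δ..(k + 1 + 1) * Δ, a ((k + 1) * Δ) ^ v * (a ((k + 1) * Δ) - a s)
      ≤ Δ * a ((k + 1) * Δ) ^ (v + 1) - ∫ s in (k + 1) * Δ..(k + 1 + 1) * Δ, a s ^ (v + 1) := by
    have := integral_rpow_mul_sub_le (v := v) (x := (k + 1) * Δ) (y := (k + 1 + 1) * Δ)
      (by nlinarith) (ha.mono (hsub _ _ (by positivity)))
      (fun s hs => ha0 s (hsub _ _ (by positivity) hs)) hv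
    rwa [show ((k : ℝ) + 1 + 1) * Δ - (k + 1) * Δ = Δ by ring] at this
  have hprev : Δ * a ((k + 1) * Δ) ^ (v + 1) ≤ ∫ s in k * Δ..(k + 1) * Δ, a s ^ (v + 1) := by
    have := AntitoneOn.sub_mul_le_integral (b := fun s => a s ^ (v + 1)) (by nlinarith)
      ((ha.rpow_const ha0 (by linarith)).mono (hsub (k * Δ) ((k + 1) * Δ) hk))
    rwa [show ((k : ℝ) + 1) * Δ - k * Δ = Δ by ring] at this
  rw [hstep]
  linarith

lemma integral_floor_step_error_add_le (ha0 : ∀ x ∈ Ici (0:ℝ), 0 ≤ a x)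
    (ha : AntitoneOn a (Ici 0)) (hv : 0 ≤ v) (hΔ : 0 < Δ) (n : ℕ) :
    (∫ s in (0:ℝ)..(n + 1) * Δ, a (⌊s / Δ⌋ * Δ) ^ v * (a (⌊s / Δ⌋ * Δ) - a s))
        + ∫ s in n * Δ..(n + 1) * Δ, a s ^ (v + 1)
      ≤ a 0 ^ v * (∫ s in (0:ℝ)..Δ, (a 0 - a s)) + ∫ s in (0:ℝ)..Δ, a s ^ (v + 1) := by
  induction n with
  | zero =>
    have hfirst := integral_comp_floor_step (fun τ s => a τ ^ v * (a τ - a s)) hΔ 0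
    simp only [Nat.cast_zero, zero_mul, zero_add, one_mul] at hfirst ⊢
    rw [hfirst, intervalIntegral.integral_const_mul]
  | succ n ih =>
    have hinit : IntervalIntegrable (fun s => a (⌊s / Δ⌋ * Δ) ^ v * (a (⌊s / Δ⌋ * Δ) - a s))
        volume 0 ((n + 1) * Δ) := by
      simpa using IntervalIntegrable.trans_iterate (a := fun k : ℕ => (k : ℝ) * Δ) (n := n + 1)
        fun k _ => by exact_mod_cast intervalIntegrable_floor_step_error ha hΔ k
    have hlast : IntervalIntegrable (fun s => a (⌊s / Δ⌋ * Δ) ^ v * (a (⌊s / Δ⌋ * Δ) - a s))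
        volume ((n + 1) * Δ) ((n + 1 + 1) * Δ) := by
      exact_mod_cast intervalIntegrable_floor_step_error ha hΔ (n + 1)
    have hsplit := integral_add_adjacent_intervals hinit hlast
    have hstep := integral_floor_step_error_succ_le ha0 ha hv hΔ n
    push_cast
    linarith

lemma integral_floor_step_error_le (ha0 : ∀ x ∈ Ici (0:ℝ), 0 ≤ a x)
    (ha : AntitoneOn a (Ici 0)) (hv : 0 ≤ v) (hΔ : 0 < Δ) {m : ℕ} (hm : 0 < m) :
    ∫ s in (0:ℝ)..m * Δ, a (⌊s / Δ⌋ * Δ) ^ v * (a (⌊s / Δ⌋ * Δ) - a s)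
      ≤ a 0 ^ v * (∫ s in (0:ℝ)..Δ, (a 0 - a s)) + ∫ s in (0:ℝ)..Δ, a s ^ (v + 1) := by
  obtain ⟨n, rfl⟩ := Nat.exists_eq_add_one_of_ne_zero hm.ne'
  have hlast_nonneg : 0 ≤ ∫ s in n * Δ..(n + 1) * Δ, a s ^ (v + 1) :=
    intervalIntegral.integral_nonneg (by nlinarith) fun s hs =>
      Real.rpow_nonneg (ha0 s (le_trans (by positivity) hs.1)) _
  have := integral_floor_step_error_add_le ha0 ha hv hΔ n
  push_cast
  linarith

lemma rpow_mul_integral_sub_add_integral_rpow_le (ha0 : ∀ x ∈ Ici (0:ℝ), 0 ≤ a x)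
    (ha : AntitoneOn a (Ici 0)) (hv : 0 ≤ v) (hΔ : 0 < Δ) :
    a 0 ^ v * (∫ s in (0:ℝ)..Δ, (a 0 - a s)) + ∫ s in (0:ℝ)..Δ, a s ^ (v + 1)
      ≤ 2 * a 0 ^ (v + 1) * Δ := by
  have hsub : Icc 0 Δ ⊆ Ici (0:ℝ) := Icc_subset_Ici_self
  have hsub_le : ∫ s in (0:ℝ)..Δ, (a 0 - a s) ≤ (Δ - 0) * a 0 :=
    integral_le_sub_mul_of_le hΔ.le
      (intervalIntegrable_const.sub
        (ha.mono ((uIcc_of_le hΔ.le).le.trans hsub)).intervalIntegrable)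
      fun s hs => sub_le_self _ (ha0 s (hsub hs))
  have hpow_le :=
    ((ha.rpow_const ha0 (v := v + 1) (by linarith)).mono hsub).integral_le_sub_mul hΔ.le
  have ha0_nonneg : 0 ≤ a 0 := ha0 0 self_mem_Ici
  have hpow : a 0 ^ (v + 1) = a 0 ^ v * a 0 := Real.rpow_add_one' ha0_nonneg (by linarith)
  have := mul_le_mul_of_nonneg_left hsub_le (Real.rpow_nonneg ha0_nonneg v)
  simp only [sub_zero] at this hpow_le
  nlinarith

end FloorStepError

theorem stmt2_general (a : ℝ → ℝ) (v : ℝ) (hv : 0 ≤ v)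
    (ha_nonneg : ∀ x ∈ Ici (0:ℝ), 0 ≤ a x)
    (ha_anti : AntitoneOn a (Ici 0)) :
    (∀ (m : ℕ) (Δ : ℝ), 0 < m → 0 < Δ →
      ∫ s in (0:ℝ)..(m * Δ),
          (a ((⌊s / Δ⌋ : ℝ) * Δ)) ^ v * (a ((⌊s / Δ⌋ : ℝ) * Δ) - a s)
        ≤ (a 0) ^ v * (∫ s in (0:ℝ)..Δ, (a 0 - a s))
          + ∫ s in (0:ℝ)..Δ, (a s) ^ (v + 1)) ∧
    ∃ C : ℝ, ∀ (m : ℕ) (Δ : ℝ), 0 < m → 0 < Δ →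
      ∫ s in (0:ℝ)..(m * Δ),
          (a ((⌊s / Δ⌋ : ℝ) * Δ)) ^ v * (a ((⌊s / Δ⌋ : ℝ) * Δ) - a s) ≤ C * Δ := by
  refine ⟨fun m Δ hm hΔ => integral_floor_step_error_le ha_nonneg ha_anti hv hΔ hm,
    2 * a 0 ^ (v + 1), fun m Δ hm hΔ => ?_⟩
  exact (integral_floor_step_error_le ha_nonneg ha_anti hv hΔ hm).trans
    (rpow_mul_integral_sub_add_integral_rpow_le ha_nonneg ha_anti hv hΔ)

/-- Riemann-type discretization error bound for a non-increasing integrable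
nonnegative function `a` and exponent `v ≥ 0`, with `τ(s) = ⌊s/Δ⌋Δ`. -/
theorem stmt2 (a : ℝ → ℝ) (v : ℝ) (hv : 0 ≤ v)
    (ha_nonneg : ∀ x ∈ Ici (0:ℝ), 0 ≤ a x)
    (ha_anti : AntitoneOn a (Ici 0))
    (ha_int : IntegrableOn a (Ici 0)) :
    (∀ (m : ℕ) (Δ : ℝ), 0 < m → 0 < Δ →
      ∫ s in (0:ℝ)..(m * Δ),
          (a ((⌊s / Δ⌋ : ℝ) * Δ)) ^ v * (a ((⌊s / Δ⌋ : ℝ) * Δ) - a s)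
        ≤ (a 0) ^ v * (∫ s in (0:ℝ)..Δ, (a 0 - a s))
          + ∫ s in (0:ℝ)..Δ, (a s) ^ (v + 1)) ∧
    ∃ C : ℝ, ∀ (m : ℕ) (Δ : ℝ), 0 < m → 0 < Δ →
      ∫ s in (0:ℝ)..(m * Δ),
          (a ((⌊s / Δ⌋ : ℝ) * Δ)) ^ v * (a ((⌊s / Δ⌋ : ℝ) * Δ) - a s) ≤ C * Δ :=
  stmt2_general a v hv ha_nonneg ha_anti
end

section
/- Suppose a(s) = ∫_s^∞ φ(y) dy where φ is nonnegative, bounded, and φ(s) ≤ C s^{−α−1} for s large, with α > 1. Then for any r ≥ 1 there is a constant C' such that for all n, Σ_{l=0}^{n−1} Δ ( (1/Δ) ∫_{lΔ}^{(l+1)Δ} [a(lΔ) − a(s)] ds )^r ≤ C' Δ^r, uniformly in Δ ∈ (0,1]. -/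
/-!
On the cell `[lΔ, (l+1)Δ]` the increment `a(lΔ) - a(s) = ∫_{lΔ}^s φ` lies between `0` and
`b_l = ∫_{lΔ}^{(l+1)Δ} φ ≤ MΔ`, hence so does its average `x_l`, and
`x_l ^ r ≤ (MΔ)^(r-1) b_l`. The `b_l` telescope to `∫_0^{nΔ} φ ≤ ∫_0^∞ φ`, so the sum is at most
`M^(r-1) (∫_0^∞ φ) Δ^r`.
-/

open MeasureTheory Filter Set
open scoped Interval

lemma Real.rpow_le_rpow_sub_one_mul {x b c r : ℝ} (hx : 0 ≤ x) (hxb : x ≤ b) (hxc : x ≤ c)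
    (hr : 1 ≤ r) : x ^ r ≤ c ^ (r - 1) * b := by
  calc x ^ r = x ^ (r - 1 + 1) := by rw [sub_add_cancel]
    _ = x ^ (r - 1) * x := by rw [Real.rpow_add' hx (by linarith), Real.rpow_one]
    _ ≤ c ^ (r - 1) * b :=
        mul_le_mul (Real.rpow_le_rpow hx hxc (by linarith)) hxb hx
          (Real.rpow_nonneg (hx.trans hxc) _)

namespace intervalIntegral

variable {φ : ℝ → ℝ} {u v : ℝ}

lemma integral_primitive_nonneg (huv : u ≤ v) (hφ : ∀ y, 0 ≤ φ y) :
    0 ≤ ∫ s in u..v, ∫ y in u..s, φ y :=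
  integral_nonneg huv fun _ hs => integral_nonneg hs.1 fun y _ => hφ y

lemma integral_primitive_le_mul (huv : u ≤ v) (hφ : ∀ y, 0 ≤ φ y)
    (hφi : IntervalIntegrable φ volume u v) :
    ∫ s in u..v, ∫ y in u..s, φ y ≤ (v - u) * ∫ y in u..v, φ y := by
  have hbound : ∀ s ∈ Ι u v, ‖∫ y in u..s, φ y‖ ≤ ∫ y in u..v, φ y := by
    intro s hs
    rw [uIoc_of_le huv] at hs
    rw [Real.norm_of_nonneg (integral_nonneg hs.1.le fun y _ => hφ y)]
    exact integral_mono_interval le_rfl hs.1.le hs.2 (Eventually.of_forall hφ) hφi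
  calc ∫ s in u..v, ∫ y in u..s, φ y
      ≤ ‖∫ s in u..v, ∫ y in u..s, φ y‖ := Real.le_norm_self _
    _ ≤ (∫ y in u..v, φ y) * |v - u| := norm_integral_le_of_norm_le_const hbound
    _ = (v - u) * ∫ y in u..v, φ y := by rw [abs_of_nonneg (sub_nonneg.2 huv), mul_comm]

lemma integral_le_mul_of_le {M : ℝ} (huv : u ≤ v) (hφ : ∀ y, 0 ≤ φ y) (hM : ∀ y, φ y ≤ M) :
    ∫ y in u..v, φ y ≤ M * (v - u) := by
  calc ∫ y in u..v, φ y ≤ ‖∫ y in u..v, φ y‖ := Real.le_norm_self _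
    _ ≤ M * |v - u| :=
        norm_integral_le_of_norm_le_const fun y _ =>
          (Real.norm_of_nonneg (hφ y)).trans_le (hM y)
    _ = M * (v - u) := by rw [abs_of_nonneg (sub_nonneg.2 huv)]

lemma intervalIntegrable_of_integrableOn_Ioi_zero (hφ : IntegrableOn φ (Ioi 0)) (hu : 0 ≤ u)
    (hv : 0 ≤ v) : IntervalIntegrable φ volume u v :=
  (((integrableOn_Ici_iff_integrableOn_Ioi (f := φ) (b := 0)).2 hφ).mono_set
    fun _ hy => (le_inf hu hv).trans hy.1).intervalIntegrable

lemma sum_integral_step_le_integral_Ioi (hφ : ∀ y, 0 ≤ φ y) (hφi : IntegrableOn φ (Ioi 0)) {Δ : ℝ}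
    (hΔ : 0 ≤ Δ) (n : ℕ) :
    ∑ l ∈ Finset.range n, ∫ y in (l : ℝ) * Δ..(l : ℝ) * Δ + Δ, φ y
      ≤ ∫ y in Ioi 0, φ y := by
  have hcells : ∑ l ∈ Finset.range n, ∫ y in (l : ℝ) * Δ..(l : ℝ) * Δ + Δ, φ y
      = ∫ y in (0 : ℝ)..(n : ℝ) * Δ, φ y := by
    simpa [add_one_mul] using sum_integral_adjacent_intervals (a := fun k : ℕ => (k : ℝ) * Δ)
      fun k _ => intervalIntegrable_of_integrableOn_Ioi_zero hφi (by positivity) (by positivity)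
  rw [hcells, ← integral_Ioi_sub_Ioi hφi (by positivity), sub_le_self_iff]
  exact setIntegral_nonneg measurableSet_Ioi fun y _ => hφ y

end intervalIntegral

open intervalIntegral in
lemma cell_average_rpow_le {a φ : ℝ → ℝ} {r M u Δ : ℝ} (hr : 1 ≤ r)
    (hφ : ∀ y, 0 ≤ φ y) (hM : ∀ y, φ y ≤ M) (hφi : IntegrableOn φ (Ioi 0))
    (ha : ∀ s : ℝ, 0 ≤ s → a s = ∫ y in Ioi s, φ y) (hu : 0 ≤ u) (hΔ : 0 < Δ) :
    Δ * ((1 / Δ) * ∫ s in u..u + Δ, (a u - a s)) ^ r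
      ≤ Δ * (M * Δ) ^ (r - 1) * ∫ y in u..u + Δ, φ y := by
  have hincr : ∫ s in u..u + Δ, (a u - a s) = ∫ s in u..u + Δ, ∫ y in u..s, φ y := by
    refine integral_congr fun s hs => ?_
    rw [uIcc_of_le (by linarith)] at hs
    rw [ha u hu, ha s (hu.trans hs.1),
      integral_Ioi_sub_Ioi (hφi.mono_set (Ioi_subset_Ioi hu)) hs.1]
  have hφuv : IntervalIntegrable φ volume u (u + Δ) :=
    intervalIntegrable_of_integrableOn_Ioi_zero hφi hu (by linarith)
  have havg_nonneg : 0 ≤ (1 / Δ) * ∫ s in u..u + Δ, (a u - a s) := by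
    rw [hincr]
    exact mul_nonneg (by positivity) (integral_primitive_nonneg (by linarith) hφ)
  have havg_le : (1 / Δ) * ∫ s in u..u + Δ, (a u - a s) ≤ ∫ y in u..u + Δ, φ y := by
    rw [hincr, one_div_mul_eq_div, div_le_iff₀ hΔ, mul_comm]
    simpa using integral_primitive_le_mul (by linarith) hφ hφuv
  have hcell_le : ∫ y in u..u + Δ, φ y ≤ M * Δ := by
    simpa using integral_le_mul_of_le (by linarith : u ≤ u + Δ) hφ hM
  rw [mul_assoc]
  exact mul_le_mul_of_nonneg_left
    (Real.rpow_le_rpow_sub_one_mul havg_nonneg havg_le (havg_le.trans hcell_le) hr) hΔ.le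

theorem stmt3_general (a φ : ℝ → ℝ) (r : ℝ) (hr : 1 ≤ r)
    (hφ_nonneg : ∀ y, 0 ≤ φ y) (M : ℝ) (hφ_bdd : ∀ y, φ y ≤ M)
    (hφ_int : IntegrableOn φ (Ioi 0))
    (ha : ∀ s : ℝ, 0 ≤ s → a s = ∫ y in Ioi s, φ y) :
    ∃ C' : ℝ, ∀ (n : ℕ) (Δ : ℝ), 0 < Δ → Δ ≤ 1 →
      ∑ l ∈ Finset.range n,
          Δ * ((1 / Δ) * ∫ s in ((l : ℝ) * Δ)..(((l : ℝ) + 1) * Δ),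
            (a ((l : ℝ) * Δ) - a s)) ^ r
        ≤ C' * Δ ^ r := by
  have hM : 0 ≤ M := (hφ_nonneg 0).trans (hφ_bdd 0)
  refine ⟨M ^ (r - 1) * ∫ y in Ioi 0, φ y, fun n Δ hΔ _ => ?_⟩
  have hscale : Δ * (M * Δ) ^ (r - 1) = M ^ (r - 1) * Δ ^ r := by
    rw [Real.mul_rpow hM hΔ.le, mul_left_comm, ← Real.rpow_one_add' hΔ.le (by linarith),
      add_sub_cancel]
  simp only [add_one_mul]
  calc _ ≤ ∑ l ∈ Finset.range n,
          Δ * (M * Δ) ^ (r - 1) * ∫ y in (l : ℝ) * Δ..(l : ℝ) * Δ + Δ, φ y :=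
        Finset.sum_le_sum fun l _ =>
          cell_average_rpow_le hr hφ_nonneg hφ_bdd hφ_int ha (by positivity) hΔ
    _ = Δ * (M * Δ) ^ (r - 1) *
          ∑ l ∈ Finset.range n, ∫ y in (l : ℝ) * Δ..(l : ℝ) * Δ + Δ, φ y :=
        (Finset.mul_sum ..).symm
    _ ≤ Δ * (M * Δ) ^ (r - 1) * ∫ y in Ioi 0, φ y :=
        mul_le_mul_of_nonneg_left
          (intervalIntegral.sum_integral_step_le_integral_Ioi hφ_nonneg hφ_int hΔ.le n)
          (by positivity)
    _ = M ^ (r - 1) * (∫ y in Ioi 0, φ y) * Δ ^ r := by rw [hscale]; ring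

/-- If `a(s) = ∫_s^∞ φ(y) dy` with `φ` nonnegative, bounded and `φ(s) ≤ C s^{-α-1}`
for `s` large (`α > 1`), then for `r ≥ 1` the discretization errors satisfy a
uniform bound of order `Δ^r`. -/
theorem stmt3 (a φ : ℝ → ℝ) (α : ℝ) (hα : 1 < α) (r : ℝ) (hr : 1 ≤ r)
    (hφ_nonneg : ∀ y, 0 ≤ φ y) (M : ℝ) (hφ_bdd : ∀ y, φ y ≤ M)
    (hφ_meas : Measurable φ)
    (hφ_int : IntegrableOn φ (Ioi 0))
    (ha : ∀ s : ℝ, 0 ≤ s → a s = ∫ y in Ioi s, φ y)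
    (C s₀ : ℝ) (hs₀ : 0 < s₀)
    (htail : ∀ s : ℝ, s₀ ≤ s → φ s ≤ C * s ^ (-α - 1)) :
    ∃ C' : ℝ, ∀ (n : ℕ) (Δ : ℝ), 0 < Δ → Δ ≤ 1 →
      ∑ l ∈ Finset.range n,
          Δ * ((1 / Δ) * ∫ s in ((l : ℝ) * Δ)..(((l : ℝ) + 1) * Δ),
            (a ((l : ℝ) * Δ) - a s)) ^ r
        ≤ C' * Δ ^ r :=
  stmt3_general a φ r hr hφ_nonneg M hφ_bdd hφ_int ha
end
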